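/- Let γ be a positive integer and let T be a tree with domination number γ that, among all trees with domination number γ, has the maximum number of minimum dominating sets, and subject to this has as few vertices as possible. Then every endvertex of T belongs to some minimum dominating set of T. -/
import Mathlib

/-- `D` is a dominating set of `G`: every vertex outside `D` has a neighbor in `D`. -/
def Dominates {V : Type*} (G : SimpleGraph V) (D : Set V) : Prop :=
  ∀ v ∉ D, ∃ u ∈ D, G.Adj u v

/-- The domination number of `G`: the minimum cardinality of a dominating set. -/
noncomputable def domN {V : Type*} (G : SimpleGraph V) : ℕ :=
  sInf {n | ∃ D : Set V, Dominates G D ∧ D.ncard = n}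

/-- `D` is a minimum dominating set of `G`. -/
def MinDomSet {V : Type*} (G : SimpleGraph V) (D : Set V) : Prop :=
  Dominates G D ∧ D.ncard = domN G

/-- The number of minimum dominating sets of `G`. -/
noncomputable def numMinDomSets {V : Type*} (G : SimpleGraph V) : ℕ :=
  {D : Set V | MinDomSet G D}.ncard

/-- An endvertex: a vertex of degree at most 1. -/
def IsEndvtx {V : Type*} (G : SimpleGraph V) (v : V) : Prop :=
  (G.neighborSet v).ncard ≤ 1

/-- A strong support vertex: a vertex adjacent to at least two endvertices. -/
def IsStrongSupportVtx {V : Type*} (G : SimpleGraph V) (v : V) : Prop :=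
  ∃ a b : V, a ≠ b ∧ G.Adj v a ∧ G.Adj v b ∧ IsEndvtx G a ∧ IsEndvtx G b

section Aux
variable {V W : Type*} {G : SimpleGraph V} {H : SimpleGraph W}

lemma dominates_univ (G : SimpleGraph V) : Dominates G Set.univ :=
  fun v hv => absurd (Set.mem_univ v) hv

lemma exists_minDomSet (G : SimpleGraph V) : ∃ D : Set V, MinDomSet G D := by
  have hne : {n | ∃ D : Set V, Dominates G D ∧ D.ncard = n}.Nonempty :=
    ⟨_, Set.univ, dominates_univ G, rfl⟩
  obtain ⟨D, hD, hcard⟩ := Nat.sInf_mem hne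
  exact ⟨D, hD, hcard⟩

lemma domN_le {D : Set V} (hD : Dominates G D) : domN G ≤ D.ncard :=
  Nat.sInf_le ⟨D, hD, rfl⟩

lemma Dominates.mapIso (e : G ≃g H) {D : Set V} (hD : Dominates G D) :
    Dominates H (⇑e '' D) := by
  intro v hv
  have h1 : e.symm v ∉ D := fun h => hv ⟨_, h, e.apply_symm_apply v⟩
  obtain ⟨x, hx, hadj⟩ := hD _ h1
  refine ⟨e x, ⟨x, hx, rfl⟩, ?_⟩
  have : H.Adj (e x) (e (e.symm v)) := e.map_adj_iff.mpr hadj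
  rwa [e.apply_symm_apply] at this

lemma MinDomSet.mapIso (e : G ≃g H) {D : Set V} (hD : MinDomSet G D) :
    MinDomSet H (⇑e '' D) := by
  have hdom : domN G = domN H := by
    unfold domN
    congr 1
    ext n
    constructor
    · rintro ⟨D, hD, rfl⟩
      exact ⟨⇑e '' D, hD.mapIso e, Set.ncard_image_of_injective _ e.injective⟩
    · rintro ⟨D, hD, rfl⟩
      exact ⟨⇑e.symm '' D, hD.mapIso e.symm, Set.ncard_image_of_injective _ e.symm.injective⟩
  exact ⟨hD.1.mapIso e, by rw [Set.ncard_image_of_injective _ e.injective, hD.2, hdom]⟩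

lemma domN_eq_of_iso (e : G ≃g H) : domN G = domN H := by
  obtain ⟨D, hD⟩ := exists_minDomSet G
  have := (hD.mapIso e).2
  rwa [Set.ncard_image_of_injective _ e.injective, hD.2] at this

lemma numMinDomSets_eq_of_iso (e : G ≃g H) : numMinDomSets G = numMinDomSets H := by
  have himg : {D' : Set W | MinDomSet H D'} = (Set.image ⇑e) '' {D : Set V | MinDomSet G D} := by
    ext D'
    constructor
    · intro hD'
      refine ⟨⇑e.symm '' D', hD'.mapIso e.symm, ?_⟩
      ext x
      simp only [Set.mem_image]
      constructor
      · rintro ⟨y, ⟨z, hz, rfl⟩, rfl⟩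
        simpa using hz
      · intro hx
        exact ⟨e.symm x, ⟨x, hx, rfl⟩, e.apply_symm_apply x⟩
    · rintro ⟨D, hD, rfl⟩
      exact hD.mapIso e
  unfold numMinDomSets
  rw [himg, Set.ncard_image_of_injective _ (Set.image_injective.mpr e.injective)]

lemma isTree_of_iso (e : G ≃g H) (hG : G.IsTree) : H.IsTree := by
  constructor
  · exact e.connected_iff.mp hG.isConnected
  · intro v c hc
    exact hG.IsAcyclic (c.map e.symm.toHom) (hc.map e.symm.injective)

end Aux

section Aux2
variable {V : Type*} {T : SimpleGraph V}

lemma induce_isAcyclic (hT : T.IsAcyclic) (s : Set V) : (T.induce s).IsAcyclic := by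
  intro v c hc
  exact hT (c.map (SimpleGraph.Embedding.induce (G := T) s).toHom)
    (hc.map (SimpleGraph.Embedding.induce (G := T) s).injective)

lemma lift_walk {s : Set V} {a b : V} (p : T.Walk a b)
    (h : ∀ x ∈ p.support, x ∈ s) (ha : a ∈ s) (hb : b ∈ s) :
    (T.induce s).Reachable ⟨a, ha⟩ ⟨b, hb⟩ := by
  induction p with
  | nil => exact SimpleGraph.Reachable.refl _
  | @cons a c b hadj q ih =>
    have hc : c ∈ s := h c (by simp [SimpleGraph.Walk.support_cons])
    have h1 : (T.induce s).Adj ⟨a, ha⟩ ⟨c, hc⟩ := by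
      simp only [SimpleGraph.comap_adj, Function.Embedding.coe_subtype]
      exact hadj
    exact h1.reachable.trans
      (ih (fun x hx => h x (by simp [SimpleGraph.Walk.support_cons, hx])) hc hb)

lemma path_avoids {u w a b : V} (huniq : ∀ x, T.Adj u x → x = w)
    (p : T.Walk a b) (hp : p.IsPath) (ha : a ≠ u) (hb : b ≠ u) :
    u ∉ p.support := by
  intro hu
  classical
  have hspec := p.take_spec hu
  set q1 := p.takeUntil u hu with hq1
  set q2 := p.dropUntil u hu with hq2
  have h2 : w ∈ q2.support.tail := by
    cases hq : q2 with
    | nil => exact absurd rfl hb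
    | @cons _ y _ hadj q' =>
      have hyw : y = w := huniq y hadj
      have hy : y ∈ q2.support.tail := by
        rw [hq, SimpleGraph.Walk.support_cons, List.tail_cons]
        exact q'.start_mem_support
      rwa [hyw, hq] at hy
  have h1 : w ∈ q1.support := by
    cases hq : q1.reverse with
    | nil => exact absurd rfl ha
    | @cons _ y _ hadj q' =>
      have hyw : y = w := huniq y hadj
      have hy : y ∈ q1.reverse.support := by
        rw [hq, SimpleGraph.Walk.support_cons]
        exact List.mem_cons_of_mem _ q'.start_mem_support
      rw [hyw] at hy
      rwa [SimpleGraph.Walk.support_reverse, List.mem_reverse] at hy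
  have hnodup : p.support.Nodup := hp.support_nodup
  rw [← hspec, SimpleGraph.Walk.support_append] at hnodup
  exact (List.disjoint_of_nodup_append hnodup) h1 h2

end Aux2

theorem extremal_tree_endvtx_mem {V : Type*} [Fintype V] (γ : ℕ) (hγ : 0 < γ)
    (T : SimpleGraph V) (hT : T.IsTree) (hdom : domN T = γ)
    (hmax : ∀ (n : ℕ) (G : SimpleGraph (Fin n)), G.IsTree → domN G = γ →
      numMinDomSets G ≤ numMinDomSets T)
    (hmin : ∀ (n : ℕ) (G : SimpleGraph (Fin n)), G.IsTree → domN G = γ →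
      numMinDomSets G = numMinDomSets T → Fintype.card V ≤ n) :
    ∀ u : V, IsEndvtx T u → ∃ D : Set V, MinDomSet T D ∧ u ∈ D := by
  intro u hu
  classical
  obtain ⟨D₀, hD₀⟩ := exists_minDomSet T
  by_cases hex : ∃ v : V, v ≠ u
  case neg =>
    push_neg at hex
    have hne : D₀.Nonempty := by
      apply Set.nonempty_of_ncard_ne_zero
      rw [hD₀.2, hdom]
      omega
    obtain ⟨v, hv⟩ := hne
    exact ⟨D₀, hD₀, hex v ▸ hv⟩
  case pos =>
  obtain ⟨v₀, hv₀⟩ := hex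
  by_contra hcon
  push_neg at hcon
  -- find the unique neighbor w of u
  obtain ⟨p⟩ := hT.isConnected.preconnected u v₀
  obtain ⟨w, hw⟩ : ∃ w, T.Adj u w := by
    cases p with
    | nil => exact absurd rfl hv₀
    | cons h q => exact ⟨_, h⟩
  have huniq : ∀ x, T.Adj u x → x = w := by
    intro x hx
    exact (Set.ncard_le_one (Set.toFinite _)).1 hu x hx w hw
  set s : Set V := {v | v ≠ u} with hs
  have hws : w ∈ s := hw.ne'
  -- T - u is a tree
  have hT' : (T.induce s).IsTree := by
    haveI : Nonempty ↥s := ⟨⟨w, hws⟩⟩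
    refine ⟨SimpleGraph.Connected.mk ?_, induce_isAcyclic hT.IsAcyclic s⟩
    rintro ⟨a, ha⟩ ⟨b, hb⟩
    obtain ⟨p0⟩ := hT.isConnected.preconnected a b
    obtain ⟨p, hp⟩ := p0.toPath
    have havoid : u ∉ p.support := path_avoids huniq p hp ha hb
    exact lift_walk p (fun x hx => show x ∈ s from fun hxu => havoid (hxu ▸ hx)) ha hb
  -- preimages of min dom sets dominate T - u
  have hpre : ∀ (D : Set V), MinDomSet T D → Dominates (T.induce s) (Subtype.val ⁻¹' D) := by
    intro D hD v' hv'
    obtain ⟨x, hx, hadj⟩ := hD.1 ↑v' hv'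
    have hxu : x ≠ u := fun h => hcon D hD (h ▸ hx)
    refine ⟨⟨x, hxu⟩, hx, ?_⟩
    simp only [SimpleGraph.comap_adj, Function.Embedding.coe_subtype]
    exact hadj
  have hsub : ∀ D : Set V, MinDomSet T D →
      (Subtype.val '' (Subtype.val ⁻¹' D : Set ↥s)) = D := by
    intro D hD
    rw [Set.image_preimage_eq_inter_range, Subtype.range_coe]
    exact Set.inter_eq_self_of_subset_left (fun x hx hxu => hcon D hD (hxu ▸ hx))
  have hcard : ∀ D : Set V, MinDomSet T D → (Subtype.val ⁻¹' D : Set ↥s).ncard = D.ncard := by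
    intro D hD
    rw [← Set.ncard_image_of_injective _ Subtype.val_injective, hsub D hD]
  -- domN (T - u) = γ
  have hle : domN (T.induce s) ≤ γ := by
    have := domN_le (hpre D₀ hD₀)
    rwa [hcard D₀ hD₀, hD₀.2, hdom] at this
  have hge : γ ≤ domN (T.induce s) := by
    by_contra hlt
    push_neg at hlt
    obtain ⟨D', hD'⟩ := exists_minDomSet (T.induce s)
    set E : Set V := insert u (Subtype.val '' D') with hE
    have hEdom : Dominates T E := by
      intro v hv
      have hvu : v ≠ u := fun h => hv (h ▸ Set.mem_insert u _)
      have hv' : (⟨v, hvu⟩ : ↥s) ∉ D' := fun h => hv (Set.mem_insert_of_mem _ ⟨_, h, rfl⟩)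
      obtain ⟨x', hx', hadj⟩ := hD'.1 _ hv'
      exact ⟨↑x', Set.mem_insert_of_mem _ ⟨x', hx', rfl⟩, hadj⟩
    have hunotin : u ∉ (Subtype.val '' D' : Set V) := by
      rintro ⟨x', _, hx'⟩
      exact x'.2 hx'
    have hEcard : E.ncard = domN (T.induce s) + 1 := by
      rw [hE, Set.ncard_insert_of_notMem hunotin (Set.toFinite _),
          Set.ncard_image_of_injective _ Subtype.val_injective, hD'.2]
    have h1 : γ ≤ E.ncard := by
      have := domN_le hEdom
      omega
    have hEγ : E.ncard = γ := by omega
    exact hcon E ⟨hEdom, by rw [hEγ, hdom]⟩ (Set.mem_insert u _)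
  have hdom' : domN (T.induce s) = γ := le_antisymm hle hge
  -- at least as many min dom sets in T - u
  have hnum_le : numMinDomSets T ≤ numMinDomSets (T.induce s) := by
    apply Set.ncard_le_ncard_of_injOn (fun D => (Subtype.val ⁻¹' D : Set ↥s))
    · intro D hD
      exact ⟨hpre D hD, by rw [hcard D hD, hD.2, hdom, hdom']⟩
    · intro D1 h1 D2 h2 heq
      have := congrArg (Set.image (Subtype.val : ↥s → V)) heq
      rwa [hsub D1 h1, hsub D2 h2] at this
  -- transport to Fin n
  haveI : Fintype ↥s := Fintype.ofFinite ↥s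
  set n := Fintype.card ↥s with hn
  let e : ↥s ≃ Fin n := Fintype.equivFin ↥s
  let G : SimpleGraph (Fin n) := (T.induce s).map e.toEmbedding
  let iso : T.induce s ≃g G := SimpleGraph.Iso.map e (T.induce s)
  have hGtree : G.IsTree := isTree_of_iso iso hT'
  have hGdom : domN G = γ := by rw [← domN_eq_of_iso iso, hdom']
  have hGnum : numMinDomSets G = numMinDomSets (T.induce s) := (numMinDomSets_eq_of_iso iso).symm
  have h1 := hmax n G hGtree hGdom
  have heqn : numMinDomSets G = numMinDomSets T :=
    le_antisymm h1 (by rw [hGnum]; exact hnum_le)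
  have h2 := hmin n G hGtree hGdom heqn
  have h3 : n < Fintype.card V := by
    apply Fintype.card_lt_of_injective_of_notMem (Subtype.val : ↥s → V) Subtype.val_injective
      (b := u)
    rw [Subtype.range_coe]
    exact fun h => h rfl
  omega
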